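/- arXiv:1103.4984 — 2 statements merged into one kernel-verified Lean document; each statement's English description precedes it below -/
import Mathlib

section
/- Let Φ be an n×N complex matrix whose columns u₁,…,u_N are unit vectors with coherence μ = max_{i≠j} |⟨u_i, u_j⟩|. Then Φ satisfies the restricted isometry property of order k with parameter δ = (k−1)μ; that is, for every k-sparse vector x ∈ ℂ^N, (1−(k−1)μ)‖x‖² ≤ ‖Φx‖² ≤ (1+(k−1)μ)‖x‖². -/
/-- `x` is `k`-sparse: it has at most `k` nonzero coordinates. -/
def Sparse {N : Type*} [Fintype N] (k : ℕ) (x : N → ℂ) : Prop :=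
  ∃ S : Finset N, S.card ≤ k ∧ ∀ i ∉ S, x i = 0

/-- `Φ` satisfies the restricted isometry property of order `k` with parameter `δ`. -/
def RIP {n N : Type*} [Fintype n] [Fintype N] (Φ : Matrix n N ℂ) (k : ℕ) (δ : ℝ) : Prop :=
  ∀ x : N → ℂ, Sparse k x →
    (1 - δ) * ∑ i, ‖x i‖ ^ 2 ≤ ∑ j, ‖Φ.mulVec x j‖ ^ 2 ∧
    ∑ j, ‖Φ.mulVec x j‖ ^ 2 ≤ (1 + δ) * ∑ i, ‖x i‖ ^ 2

/-!
With the Gram matrix `G = Φᴴ * Φ` one has `‖Φ x‖² = xᴴ G x`. Since `G` has unit diagonal and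
off-diagonal entries of modulus at most `μ`, `|‖Φ x‖² - ‖x‖²| ≤ μ ((∑ |xᵢ|)² - ‖x‖²)`, and for
`k`-sparse `x` Cauchy–Schwarz on the support gives `(∑ |xᵢ|)² ≤ k ‖x‖²`.
-/

open Matrix Finset

section

variable {n N : Type*} [Fintype n] [Fintype N]

lemma ofReal_sum_norm_sq_eq_star_dotProduct (x : N → ℂ) :
    ((∑ i, ‖x i‖ ^ 2 : ℝ) : ℂ) = star x ⬝ᵥ x := by
  push_cast
  simp only [dotProduct, Pi.star_apply, Complex.star_def, Complex.conj_mul']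

lemma ofReal_sum_norm_sq_mulVec (Φ : Matrix n N ℂ) (x : N → ℂ) :
    ((∑ j, ‖(Φ *ᵥ x) j‖ ^ 2 : ℝ) : ℂ) = star x ⬝ᵥ (Φᴴ * Φ) *ᵥ x := by
  rw [ofReal_sum_norm_sq_eq_star_dotProduct, star_mulVec, ← dotProduct_mulVec, mulVec_mulVec]

lemma norm_star_dotProduct_mulVec_le_of_diag_eq_zero (D : Matrix N N ℂ) {μ : ℝ}
    (hdiag : ∀ i, D i i = 0) (hoff : ∀ i j, i ≠ j → ‖D i j‖ ≤ μ) (x : N → ℂ) :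
    ‖star x ⬝ᵥ D *ᵥ x‖ ≤ μ * ((∑ i, ‖x i‖) ^ 2 - ∑ i, ‖x i‖ ^ 2) := by
  classical
  have hrow : ∀ i, ∑ j, ‖D i j‖ * ‖x j‖ ≤ μ * (∑ j, ‖x j‖ - ‖x i‖) := by
    intro i
    rw [← add_sum_erase _ _ (mem_univ i), hdiag, norm_zero, zero_mul, zero_add,
      ← sum_erase_eq_sub (mem_univ i), mul_sum]
    exact sum_le_sum fun j hj ↦
      mul_le_mul_of_nonneg_right (hoff i j (ne_of_mem_erase hj).symm) (norm_nonneg _)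
  calc ‖star x ⬝ᵥ D *ᵥ x‖ ≤ ∑ i, ‖x i‖ * ∑ j, ‖D i j‖ * ‖x j‖ := by
        refine (norm_sum_le _ _).trans (sum_le_sum fun i _ ↦ ?_)
        rw [norm_mul, Pi.star_apply, norm_star]
        gcongr
        exact (norm_sum_le _ _).trans_eq (by simp only [norm_mul])
    _ ≤ ∑ i, ‖x i‖ * (μ * (∑ j, ‖x j‖ - ‖x i‖)) :=
        sum_le_sum fun i _ ↦ mul_le_mul_of_nonneg_left (hrow i) (norm_nonneg _)
    _ = μ * ((∑ i, ‖x i‖) ^ 2 - ∑ i, ‖x i‖ ^ 2) := by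
        rw [sq, sum_mul, ← sum_sub_distrib, mul_sum]
        exact sum_congr rfl fun i _ ↦ by ring

lemma Sparse.sq_sum_norm_le {k : ℕ} {x : N → ℂ} (hx : Sparse k x) :
    (∑ i, ‖x i‖) ^ 2 ≤ k * ∑ i, ‖x i‖ ^ 2 := by
  obtain ⟨S, hS, hzero⟩ := hx
  have hsupp : ∀ f : ℂ → ℝ, f 0 = 0 → ∑ i ∈ S, f (x i) = ∑ i, f (x i) := fun f hf ↦
    sum_subset (subset_univ S) fun i _ hi ↦ by rw [hzero i hi, hf]
  rw [← hsupp (‖·‖) norm_zero, ← hsupp (‖·‖ ^ 2) (by simp)]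
  calc (∑ i ∈ S, ‖x i‖) ^ 2 ≤ S.card * ∑ i ∈ S, ‖x i‖ ^ 2 := sq_sum_le_card_mul_sum_sq
    _ ≤ k * ∑ i ∈ S, ‖x i‖ ^ 2 := by gcongr

theorem rip_of_gram_diag_eq_one [DecidableEq N] (Φ : Matrix n N ℂ) (k : ℕ) {μ : ℝ}
    (hμ : 0 ≤ μ) (hdiag : ∀ i, (Φᴴ * Φ) i i = 1)
    (hoff : ∀ i j, i ≠ j → ‖(Φᴴ * Φ) i j‖ ≤ μ) :
    RIP Φ k ((k - 1) * μ) := by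
  intro x hx
  set E := ∑ i, ‖x i‖ ^ 2
  have hdev : |∑ j, ‖(Φ *ᵥ x) j‖ ^ 2 - E| ≤ (k - 1) * μ * E :=
    calc |∑ j, ‖(Φ *ᵥ x) j‖ ^ 2 - E| = ‖star x ⬝ᵥ (Φᴴ * Φ - 1) *ᵥ x‖ := by
          rw [sub_mulVec, one_mulVec, dotProduct_sub, ← ofReal_sum_norm_sq_mulVec,
            ← ofReal_sum_norm_sq_eq_star_dotProduct, ← Complex.ofReal_sub, Complex.norm_real,
            Real.norm_eq_abs]
      _ ≤ μ * ((∑ i, ‖x i‖) ^ 2 - E) :=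
          norm_star_dotProduct_mulVec_le_of_diag_eq_zero _ (by simp [hdiag])
            (fun i j hij ↦ by simpa [one_apply_ne hij] using hoff i j hij) x
      _ ≤ μ * (k * E - E) := by gcongr; exact hx.sq_sum_norm_le
      _ = (k - 1) * μ * E := by ring
  rw [abs_le] at hdev
  constructor <;> linarith

end

theorem stmt0 (n N : ℕ) (Φ : Matrix (Fin n) (Fin N) ℂ) (k : ℕ) (μ : ℝ)
    (hunit : ∀ j, ∑ i, ‖Φ i j‖ ^ 2 = 1)
    (hμ : IsGreatest
      {r : ℝ | ∃ i j : Fin N, i ≠ j ∧ r = ‖∑ l, (starRingEnd ℂ) (Φ l i) * Φ l j‖} μ) :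
    RIP Φ k (((k : ℝ) - 1) * μ) := by
  have hμ0 : 0 ≤ μ := by
    obtain ⟨_, _, _, rfl⟩ := hμ.1
    positivity
  have gram_apply : ∀ i j, (Φᴴ * Φ) i j = ∑ l, (starRingEnd ℂ) (Φ l i) * Φ l j := fun i j ↦ by
    simp [mul_apply]
  refine rip_of_gram_diag_eq_one Φ k hμ0 (fun i ↦ ?_)
    (fun i j hij ↦ hμ.2 ⟨i, j, hij, by rw [gram_apply]⟩)
  rw [gram_apply]
  simp_rw [Complex.conj_mul']
  exact_mod_cast hunit i
end

section
/- Let Φ be an n×N matrix with unit column vectors that satisfies the RIP of order m with parameter ε. Then for every k ≥ m, Φ satisfies the RIP of order k with parameter δ = ε(k−1)/(m−1). -/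
open Finset

namespace Finset
variable {α : Type*} [DecidableEq α]

theorem card_powersetCard_filter_superset {s A : Finset α} {m : ℕ} (hA : A ⊆ s)
    (hm : #A ≤ m) : #{T ∈ s.powersetCard m | A ⊆ T} = (#s - #A).choose (m - #A) := by
  rw [← card_sdiff_of_subset hA, ← card_powersetCard]
  refine card_bij' (fun T _ => T \ A) (fun U _ => U ∪ A) ?_ ?_ ?_ ?_
  · intro T hT
    simp only [mem_filter, mem_powersetCard] at hT ⊢
    exact ⟨sdiff_subset_sdiff hT.1.1 le_rfl, by rw [card_sdiff_of_subset hT.2, hT.1.2]⟩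
  · intro U hU
    simp only [mem_filter, mem_powersetCard] at hU ⊢
    refine ⟨⟨union_subset (hU.1.trans sdiff_subset) hA, ?_⟩, subset_union_right⟩
    rw [card_union_of_disjoint (disjoint_of_subset_left hU.1 sdiff_disjoint), hU.2]
    omega
  · intro T hT
    exact sdiff_union_of_subset (mem_filter.1 hT).2
  · intro U hU
    exact union_sdiff_cancel_right
      (disjoint_of_subset_left (mem_powersetCard.1 hU).1 sdiff_disjoint)

variable {M : Type*} [AddCommMonoid M]

theorem sum_powersetCard_sum (s : Finset α) (m : ℕ) (f : α → M) :
    ∑ T ∈ s.powersetCard (m + 1), ∑ i ∈ T, f i = (#s - 1).choose m • ∑ i ∈ s, f i := by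
  rw [sum_comm' (t' := s) (s' := fun i => {T ∈ s.powersetCard (m + 1) | {i} ⊆ T})]
  · rw [smul_sum]
    refine sum_congr rfl fun i hi => ?_
    rw [sum_const, card_powersetCard_filter_superset (singleton_subset_iff.2 hi) (by simp)]
    simp
  · intro T i
    simp only [mem_filter, mem_powersetCard, singleton_subset_iff]
    constructor
    · rintro ⟨hT, hi⟩; exact ⟨⟨hT, hi⟩, hT.1 hi⟩
    · rintro ⟨⟨hT, hi⟩, -⟩; exact ⟨hT, hi⟩

theorem sum_powersetCard_sum_offDiag (s : Finset α) (m : ℕ) (g : α × α → M) :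
    ∑ T ∈ s.powersetCard (m + 2), ∑ p ∈ T.offDiag, g p
      = (#s - 2).choose m • ∑ p ∈ s.offDiag, g p := by
  rw [sum_comm' (t' := s.offDiag)
    (s' := fun p => {T ∈ s.powersetCard (m + 2) | {p.1, p.2} ⊆ T})]
  · rw [smul_sum]
    refine sum_congr rfl fun p hp => ?_
    obtain ⟨h1, h2, hne⟩ := mem_offDiag.1 hp
    have hcard : #{p.1, p.2} = 2 := card_pair hne
    rw [sum_const, card_powersetCard_filter_superset
      (insert_subset h1 (singleton_subset_iff.2 h2)) (by omega), hcard]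
    simp
  · intro T p
    simp only [mem_filter, mem_powersetCard, mem_offDiag, insert_subset_iff, singleton_subset_iff]
    constructor
    · rintro ⟨hT, h1, h2, hne⟩; exact ⟨⟨hT, h1, h2⟩, hT.1 h1, hT.1 h2, hne⟩
    · rintro ⟨⟨hT, h1, h2⟩, -, -, hne⟩; exact ⟨hT, h1, h2, hne⟩

theorem sub_one_mul_abs_sum_offDiag_le_of_powersetCard (q : α × α → ℝ) (d : α → ℝ) (ε : ℝ)
    {s : Finset α} {m : ℕ} (hm : 2 ≤ m) (hms : m ≤ #s)
    (h : ∀ T ∈ s.powersetCard m, |∑ p ∈ T.offDiag, q p| ≤ ε * ∑ i ∈ T, d i) :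
    ((m : ℝ) - 1) * |∑ p ∈ s.offDiag, q p| ≤ ((#s : ℝ) - 1) * (ε * ∑ i ∈ s, d i) := by
  obtain ⟨r, rfl⟩ := Nat.exists_eq_add_of_le' hm
  set c₁ : ℝ := (((#s - 1).choose (r + 1) : ℕ) : ℝ)
  set c₂ : ℝ := (((#s - 2).choose r : ℕ) : ℝ)
  have hc₂ : 0 < c₂ := by unfold c₂; exact_mod_cast Nat.choose_pos (by omega)
  have hchoose : ((#s : ℝ) - 1) * c₂ = c₁ * (r + 1) := by
    have h := Nat.add_one_mul_choose_eq (#s - 2) r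
    rw [show #s - 2 + 1 = #s - 1 by omega] at h
    unfold c₁ c₂
    rw [show ((#s : ℝ) - 1) = ((#s - 1 : ℕ) : ℝ) by push_cast [show 1 ≤ #s by omega]; ring]
    exact_mod_cast h
  have haverage : c₂ * |∑ p ∈ s.offDiag, q p| ≤ ε * (c₁ * ∑ i ∈ s, d i) :=
    calc c₂ * |∑ p ∈ s.offDiag, q p|
        = |∑ T ∈ s.powersetCard (r + 2), ∑ p ∈ T.offDiag, q p| := by
          rw [sum_powersetCard_sum_offDiag, nsmul_eq_mul, abs_mul, Nat.abs_cast]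
      _ ≤ ∑ T ∈ s.powersetCard (r + 2), ε * ∑ i ∈ T, d i :=
          (abs_sum_le_sum_abs _ _).trans (sum_le_sum h)
      _ = ε * (c₁ * ∑ i ∈ s, d i) := by
          rw [← mul_sum, sum_powersetCard_sum, nsmul_eq_mul]
  refine le_of_mul_le_mul_left ?_ hc₂
  calc c₂ * ((((r + 2 : ℕ) : ℝ) - 1) * |∑ p ∈ s.offDiag, q p|)
      = (r + 1) * (c₂ * |∑ p ∈ s.offDiag, q p|) := by push_cast; ring
    _ ≤ (r + 1) * (ε * (c₁ * ∑ i ∈ s, d i)) := by gcongr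
    _ = c₂ * (((#s : ℝ) - 1) * (ε * ∑ i ∈ s, d i)) := by
        linear_combination (ε * ∑ i ∈ s, d i) * hchoose.symm

theorem abs_sum_offDiag_le_of_card_le (q : α × α → ℝ) (d : α → ℝ) (ε : ℝ)
    {s : Finset α} {m k : ℕ} (hm : 2 ≤ m) (hk : m ≤ k) (hs : #s ≤ k)
    (h : ∀ T ⊆ s, #T ≤ m → |∑ p ∈ T.offDiag, q p| ≤ ε * ∑ i ∈ T, d i) :
    |∑ p ∈ s.offDiag, q p| ≤ ε * ((k : ℝ) - 1) / ((m : ℝ) - 1) * ∑ i ∈ s, d i := by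
  have hm' : (2 : ℝ) ≤ m := by exact_mod_cast hm
  have hk' : (m : ℝ) ≤ k := by exact_mod_cast hk
  have hs' : (#s : ℝ) ≤ k := by exact_mod_cast hs
  rw [div_mul_eq_mul_div, le_div_iff₀ (by linarith)]
  have habs := abs_nonneg (∑ p ∈ s.offDiag, q p)
  rcases le_or_gt #s m with hsm | hms
  · have := h s subset_rfl hsm
    nlinarith
  · have := sub_one_mul_abs_sum_offDiag_le_of_powersetCard q d ε hm hms.le
      fun T hT => h T (mem_powersetCard.1 hT).1 (mem_powersetCard.1 hT).2.le
    have hms' : (m : ℝ) < #s := by exact_mod_cast hms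
    have hεE : 0 ≤ ε * ∑ i ∈ s, d i :=
      nonneg_of_mul_nonneg_right ((mul_nonneg (by linarith) habs).trans this) (by linarith)
    nlinarith

end Finset

namespace Matrix
variable {𝕜 : Type*} [RCLike 𝕜] {n N : Type*} [Fintype n]

def gramTerm (Φ : Matrix n N 𝕜) (x : N → 𝕜) (p : N × N) : ℝ :=
  RCLike.re (star (x p.1) * (Φᴴ * Φ) p.1 p.2 * x p.2)

theorem sum_norm_sq_eq_re_star_dotProduct (y : n → 𝕜) :
    ∑ a, ‖y a‖ ^ 2 = RCLike.re (star y ⬝ᵥ y) := by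
  simp only [dotProduct, Pi.star_apply, RCLike.star_def, RCLike.conj_mul, map_sum,
    ← RCLike.ofReal_pow, RCLike.ofReal_re]

theorem gramTerm_self (Φ : Matrix n N 𝕜) (hunit : ∀ j, ∑ i, ‖Φ i j‖ ^ 2 = 1) (x : N → 𝕜)
    (i : N) : gramTerm Φ x (i, i) = ‖x i‖ ^ 2 := by
  have hdiag : (Φᴴ * Φ) i i = 1 := by
    simp only [mul_apply, conjTranspose_apply, RCLike.star_def, RCLike.conj_mul]
    exact_mod_cast hunit i
  simp only [gramTerm, hdiag, mul_one, RCLike.star_def, RCLike.conj_mul, ← RCLike.ofReal_pow,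
    RCLike.ofReal_re]

variable [Fintype N]

theorem sum_norm_mulVec_sq_eq_sum_gramTerm (Φ : Matrix n N 𝕜) (x : N → 𝕜) :
    ∑ a, ‖(Φ *ᵥ x) a‖ ^ 2 = ∑ p, gramTerm Φ x p := by
  rw [sum_norm_sq_eq_re_star_dotProduct, star_mulVec, ← dotProduct_mulVec, mulVec_mulVec,
    Fintype.sum_prod_type]
  simp only [dotProduct, mulVec, mul_sum, map_sum, gramTerm, mul_assoc, Pi.star_apply]

variable [DecidableEq N]

theorem sum_norm_mulVec_sq_eq_of_support (Φ : Matrix n N 𝕜)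
    (hunit : ∀ j, ∑ i, ‖Φ i j‖ ^ 2 = 1) {x : N → 𝕜} {S : Finset N} (hx : ∀ i ∉ S, x i = 0) :
    ∑ a, ‖(Φ *ᵥ x) a‖ ^ 2 = ∑ i, ‖x i‖ ^ 2 + ∑ p ∈ S.offDiag, gramTerm Φ x p := by
  have hvanish : ∀ p ∉ S ×ˢ S, gramTerm Φ x p = 0 := by
    intro p hp
    rcases not_and_or.1 (mem_product.not.1 hp) with h | h <;> simp [gramTerm, hx _ h]
  rw [sum_norm_mulVec_sq_eq_sum_gramTerm, ← sum_subset (subset_univ _) fun p _ => hvanish p,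
    ← diag_union_offDiag, sum_union (disjoint_diag_offDiag _), sum_diag]
  simp only [gramTerm_self Φ hunit]
  rw [sum_subset (subset_univ S) fun i _ hi => by simp [hx i hi]]

end Matrix

theorem RIP.abs_sum_gramTerm_offDiag_le {n N : Type*} [Fintype n] [Fintype N] [DecidableEq N]
    {Φ : Matrix n N ℂ} {m : ℕ} {ε : ℝ} (h : RIP Φ m ε)
    (hunit : ∀ j, ∑ i, ‖Φ i j‖ ^ 2 = 1) (x : N → ℂ) {T : Finset N} (hT : #T ≤ m) :
    |∑ p ∈ T.offDiag, Φ.gramTerm x p| ≤ ε * ∑ i ∈ T, ‖x i‖ ^ 2 := by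
  set y := Set.indicator T x
  have hy : ∀ i ∉ T, y i = 0 := fun i hi => Set.indicator_of_notMem hi x
  have hnorm : ∑ i, ‖y i‖ ^ 2 = ∑ i ∈ T, ‖x i‖ ^ 2 := by
    rw [← sum_subset (subset_univ T) fun i _ hi => by simp [hy i hi]]
    exact sum_congr rfl fun i hi => by simp only [y, Set.indicator_of_mem (mem_coe.2 hi)]
  have hoff : ∑ p ∈ T.offDiag, Φ.gramTerm y p = ∑ p ∈ T.offDiag, Φ.gramTerm x p := by
    refine sum_congr rfl fun p hp => ?_
    obtain ⟨h1, h2, -⟩ := mem_offDiag.1 hp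
    simp [Matrix.gramTerm, y, Set.indicator_of_mem (mem_coe.2 h1),
      Set.indicator_of_mem (mem_coe.2 h2)]
  obtain ⟨hlow, hupp⟩ := h y ⟨T, hT, hy⟩
  rw [Matrix.sum_norm_mulVec_sq_eq_of_support Φ hunit hy, hoff, hnorm] at hlow hupp
  rw [abs_le]
  constructor <;> linarith

theorem stmt1 (n N : ℕ) (Φ : Matrix (Fin n) (Fin N) ℂ) (m k : ℕ) (ε : ℝ)
    (hunit : ∀ j, ∑ i, ‖Φ i j‖ ^ 2 = 1)
    (hm : 2 ≤ m) (hk : m ≤ k)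
    (hRIP : RIP Φ m ε) :
    RIP Φ k (ε * ((k : ℝ) - 1) / ((m : ℝ) - 1)) := by
  rintro x ⟨S, hS, hx⟩
  have hexpand := Φ.sum_norm_mulVec_sq_eq_of_support hunit hx
  have hoff := abs_sum_offDiag_le_of_card_le (Φ.gramTerm x) (fun i => ‖x i‖ ^ 2) ε hm hk hS
    fun T _ hT => hRIP.abs_sum_gramTerm_offDiag_le hunit x hT
  rw [sum_subset (subset_univ S) fun i _ hi => by simp [hx i hi]] at hoff
  rw [hexpand]
  constructor <;> linarith [abs_le.1 hoff]
end
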